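/- Suppose a Cartan morphism χ: P → P̂ exists between an observer space Cartan geometry (π: P → O, A) and the reconstructed Cartan geometry (π̂: P̂ → Ô, Â), i.e., χ is a diffeomorphism intertwining the bundle projections (π̂ ∘ χ = σ ∘ π) and the fundamental vector fields (χ_* ∘ A̲(a) = Â̲(a) ∘ χ for all a ∈ 𝔤). Then χ is uniquely determined: writing χ(p) = (x(p), f(p)) as a frame, the base point is x(p) = π'(π(p)) and the frame vectors are fᵢ(p) = π'_*(π_*(A̲(𝓩ᵢ)(p))). -/
import Mathlib


/-- If a Cartan morphism `χ : P → P̂` exists between an observer space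
Cartan geometry `(π : P → O, A)` and the reconstructed observer space Cartan geometry
`(π̂ : P̂ → Ô, Â)` of the Finsler spacetime `(M,F)` derived from it — i.e. `χ`
intertwines the bundle projections (`π̂ ∘ χ = σ ∘ π` with `π̂' ∘ σ = π'`) and the
fundamental vector fields (`χ_* ∘ A̲(a) = Â̲(a) ∘ χ`) — then `χ` is uniquely
determined: writing `χ(p)` as a frame `(x(p), f(p))`, one has `x(p) = π'(π(p))` and
`fᵢ(p) = π'_*(π_*(A̲(𝓩ᵢ)(p)))`. All manifolds, tangent spaces and (differentials of)
maps are abstracted as types and functions, with the relevant commuting diagrams as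
hypotheses. -/
theorem cartan_morphism_uniquely_determined
    (P Phat O Ohat M TP TPhat TO TOhat TM : Type*)
    (π : P → O) (πhat : Phat → Ohat) (π' : O → M) (πhat' : Ohat → M)
    (σ : O → Ohat)                                 -- embedding of O into Ô
    (χ : P → Phat)
    (πs : TP → TO) (πhats : TPhat → TOhat)          -- differentials of π, π̂
    (π's : TO → TM) (πhat's : TOhat → TM)           -- differentials of π', π̂'
    (σs : TO → TOhat) (χs : TP → TPhat)             -- differentials of σ, χ
    (AZ : Fin 4 → P → TP)                           -- fundamental fields A̲(𝓩ᵢ)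
    (AhatZ : Fin 4 → Phat → TPhat)                  -- fundamental fields Â̲(𝓩ᵢ)
    (xcomp : Phat → M) (fcomp : Phat → Fin 4 → TM)  -- frame components of P̂
    -- frame structure of the reconstructed bundle P̂:
    (hframe_x : ∀ q, xcomp q = πhat' (πhat q))
    (hframe_f : ∀ q i, fcomp q i = πhat's (πhats (AhatZ i q)))
    -- χ is a bundle morphism: π̂ ∘ χ = σ ∘ π, and σ satisfies π̂' ∘ σ = π':
    (hbundle : ∀ p, πhat (χ p) = σ (π p))
    (hsigma : ∀ o, πhat' (σ o) = π' o)
    -- differentials of these diagrams: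
    (hbundle_s : ∀ v, πhats (χs v) = σs (πs v))
    (hsigma_s : ∀ w, πhat's (σs w) = π's w)
    -- χ intertwines the fundamental vector fields:
    (hfund : ∀ i p, χs (AZ i p) = AhatZ i (χ p)) :
    ∀ p, xcomp (χ p) = π' (π p) ∧ ∀ i, fcomp (χ p) i = π's (πs (AZ i p)) := by
  intro p
  refine ⟨by rw [hframe_x, hbundle, hsigma], fun i => ?_⟩
  rw [hframe_f, ← hfund, hbundle_s, hsigma_s]
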